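/- In a deterministic environment with finite state and action spaces, if a data-collection policy π_old has full support (assigns positive probability to every action in every state), then for every goal g reachable from the initial state within horizon T, the relabeled conditional action distribution π*(a_t|s_t, g, h) — defined as the conditional distribution of the action at time t under π_old's trajectory distribution given that state s_t is visited at time t and the trajectory terminates at g at time T — defines a policy that reaches g from s_t in h = T − t steps with probability 1 when g is reachable from s_t in exactly h steps. -/
import Mathlib


variable {S A : Type}

/-- The deterministic state sequence generated from `s0` by applying actions `as`. -/
def runDyn (f : S → A → S) (s0 : S) (as : ℕ → A) : ℕ → S
  | 0 => s0
  | t + 1 => f (runDyn f s0 as t) (as t)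

/-- Probability, under policy `πold` and deterministic dynamics `f`, that the state
reached after `h` steps from `s` equals `g`. -/
noncomputable def reachProb [Fintype A] [DecidableEq S] (f : S → A → S) (πold : S → A → ℝ) :
    ℕ → S → S → ℝ
  | 0, s, g => if s = g then 1 else 0
  | h + 1, s, g => ∑ a, πold s a * reachProb f πold h (f s a) g

/-- The relabeled policy `π*(a|s,g,h)`: the conditional distribution of the action at a
state `s` under `πold`'s trajectory distribution, given that the trajectory is at `s`
with `h` steps remaining and terminates at `g`. By the Markov property and determinism,
`π*(a|s,g,h) = πold(a|s)·P_{πold}(s_h = g | s_0 = f(s,a), h−1 steps) / P_{πold}(s_h = g | s_0 = s, h steps)`. -/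
noncomputable def relabeledPolicy [Fintype A] [DecidableEq S] (f : S → A → S)
    (πold : S → A → ℝ) (s g : S) (h : ℕ) (a : A) : ℝ :=
  match h with
  | 0 => πold s a
  | h' + 1 => πold s a * reachProb f πold h' (f s a) g / reachProb f πold (h' + 1) s g

/-- Probability that running the relabeled policy `π*(·|·,g,·)` for `h` steps from `s`
(decrementing the remaining horizon each step) terminates at `g`. -/
noncomputable def reachProbStar [Fintype A] [DecidableEq S] (f : S → A → S)
    (πold : S → A → ℝ) : ℕ → S → S → ℝ
  | 0, s, g => if s = g then 1 else 0
  | h + 1, s, g =>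
      ∑ a, relabeledPolicy f πold s g (h + 1) a * reachProbStar f πold h (f s a) g

lemma runDyn_shift (f : S → A → S) (s : S) (as : ℕ → A) (h : ℕ) :
    runDyn f s as (h + 1) = runDyn f (f s (as 0)) (fun n => as (n + 1)) h := by
  induction h with
  | zero => rfl
  | succ h ih =>
    show f (runDyn f s as (h + 1)) (as (h + 1)) = _
    rw [ih]
    rfl

lemma reachProb_nonneg [Fintype A] [DecidableEq S] (f : S → A → S) (πold : S → A → ℝ)
    (hsupp : ∀ s a, 0 < πold s a) (h : ℕ) (s g : S) :
    0 ≤ reachProb f πold h s g := by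
  induction h generalizing s with
  | zero => simp only [reachProb]; split <;> norm_num
  | succ h ih =>
    exact Finset.sum_nonneg fun a _ => mul_nonneg (hsupp s a).le (ih (f s a))

lemma reachProb_pos_iff [Fintype A] [DecidableEq S] [Nonempty A]
    (f : S → A → S) (πold : S → A → ℝ)
    (hsupp : ∀ s a, 0 < πold s a) (h : ℕ) (s g : S) :
    0 < reachProb f πold h s g ↔ ∃ as : ℕ → A, runDyn f s as h = g := by
  induction h generalizing s with
  | zero =>
    simp only [reachProb]
    constructor
    · intro hp
      split at hp
      · next hsg => exact ⟨fun _ => Classical.arbitrary A, hsg⟩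
      · norm_num at hp
    · rintro ⟨as, hr⟩
      simp only [runDyn] at hr
      simp [hr]
  | succ h ih =>
    constructor
    · intro hp
      have : ∃ a : A, 0 < πold s a * reachProb f πold h (f s a) g := by
        by_contra hc
        push_neg at hc
        have : reachProb f πold (h + 1) s g ≤ 0 := Finset.sum_nonpos fun a _ => hc a
        linarith
      obtain ⟨a, ha⟩ := this
      have hpos : 0 < reachProb f πold h (f s a) g := by
        rcases (reachProb_nonneg f πold hsupp h (f s a) g).lt_or_eq with hq | hq
        · exact hq
        · exfalso; rw [← hq, mul_zero] at ha; exact lt_irrefl 0 ha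
      obtain ⟨as, hr⟩ := (ih (f s a)).1 hpos
      refine ⟨fun n => if n = 0 then a else as (n - 1), ?_⟩
      rw [runDyn_shift]
      simpa using hr
    · rintro ⟨as, hr⟩
      rw [runDyn_shift] at hr
      have hpos : 0 < reachProb f πold h (f s (as 0)) g :=
        (ih (f s (as 0))).2 ⟨fun n => as (n + 1), hr⟩
      have : (0:ℝ) < πold s (as 0) * reachProb f πold h (f s (as 0)) g :=
        mul_pos (hsupp s (as 0)) hpos
      calc (0:ℝ) < πold s (as 0) * reachProb f πold h (f s (as 0)) g := this
        _ ≤ ∑ a, πold s a * reachProb f πold h (f s a) g :=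
            Finset.single_le_sum
              (fun a _ => mul_nonneg (hsupp s a).le (reachProb_nonneg f πold hsupp h (f s a) g))
              (Finset.mem_univ (as 0))
        _ = reachProb f πold (h + 1) s g := rfl

lemma reachProbStar_eq_one [Fintype A] [DecidableEq S] [Nonempty A]
    (f : S → A → S) (πold : S → A → ℝ)
    (hsupp : ∀ s a, 0 < πold s a) (h : ℕ) (s g : S)
    (hreach : ∃ as : ℕ → A, runDyn f s as h = g) :
    reachProbStar f πold h s g = 1 := by
  induction h generalizing s with
  | zero =>
    obtain ⟨as, hr⟩ := hreach
    simp only [runDyn] at hr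
    simp [reachProbStar, hr]
  | succ h ih =>
    have hD : 0 < reachProb f πold (h + 1) s g :=
      (reachProb_pos_iff f πold hsupp (h + 1) s g).2 hreach
    have hterm : ∀ a : A,
        relabeledPolicy f πold s g (h + 1) a * reachProbStar f πold h (f s a) g
        = πold s a * reachProb f πold h (f s a) g / reachProb f πold (h + 1) s g := by
      intro a
      rcases (reachProb_nonneg f πold hsupp h (f s a) g).lt_or_eq with hp | hp
      · rw [ih (f s a) ((reachProb_pos_iff f πold hsupp h (f s a) g).1 hp), mul_one]
        rfl
      · show πold s a * reachProb f πold h (f s a) g / reachProb f πold (h + 1) s g * _ = _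
        rw [← hp]
        ring
    show (∑ a, relabeledPolicy f πold s g (h + 1) a * reachProbStar f πold h (f s a) g) = 1
    rw [Finset.sum_congr rfl fun a _ => hterm a, ← Finset.sum_div]
    have : (∑ a, πold s a * reachProb f πold h (f s a) g) = reachProb f πold (h + 1) s g := rfl
    rw [this, div_self hD.ne']

/-- In a deterministic environment with finite state and action spaces, if
the data-collection policy `πold` has full support, then whenever the goal `g` is
reachable from `s` in exactly `h` steps (`h ≤ T`, so that conditioning is well-defined),
the relabeled policy `π*` reaches `g` from `s` in `h` steps with probability 1. -/
theorem relabeled_policy_optimal [Fintype S] [Fintype A] [DecidableEq S]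
    (f : S → A → S) (πold : S → A → ℝ) (T : ℕ)
    (hsupp : ∀ s a, 0 < πold s a)
    (hdist : ∀ s, ∑ a, πold s a = 1)
    (s : S) (g : S) (h : ℕ) (hhT : h ≤ T)
    (hreach : ∃ as : ℕ → A, runDyn f s as h = g) :
    reachProbStar f πold h s g = 1 := by
  have hA : Nonempty A := by
    by_contra hc
    rw [not_nonempty_iff] at hc
    have := hdist s
    rw [Finset.univ_eq_empty, Finset.sum_empty] at this
    norm_num at this
  exact reachProbStar_eq_one f πold hsupp h s g hreach
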